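/- arXiv:1207.4929 — 3 statements merged into one kernel-verified Lean document; each statement's English description precedes it below -/
import Mathlib

section
/- Energy estimate for classical solutions: let L : ℝ → ℝ be continuously differentiable with L' ≥ 0, let A, B ∈ C¹([0,T]), and let u be a classical solution of u_t = ∂ₓ(L(u_x)) on [0,1]×[0,T] with u(0,t) = A(t) and u(1,t) = B(t) for all t. Set g(x,t) = (B(t) − A(t))x + A(t) and v = u − g. Then for all t ∈ [0,T], ‖v(·,t)‖²_{L²(0,1)} ≤ (‖v(·,0)‖²_{L²(0,1)} + ∫₀ᵀ∫₀¹ (∂_t g(x,s))² dx ds) · e^T. -/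
/-!
Subtracting the affine lift `g` of the boundary data gives `v = u - g` with `v(0,t) = v(1,t) = 0`,
so for `E(t) = ‖v(·,t)‖²` integration by parts turns `∫ v u_t = ∫ v ∂ₓ L(u_x)` into
`-∫ (u_x - g_x)(L(u_x) - L(g_x)) ≤ 0`, using that `g_x` is constant in `x` and `L` is monotone.
Young's inequality on the remaining term `-2 ∫ v g_t` gives `E' ≤ E + ‖g_t‖²`, and Grönwall's
inequality concludes.
-/

open MeasureTheory Set Filter

noncomputable section

/-- A classical solution of `u_t = ∂ₓ(L(u_x))` on `[0,1] × [0,T]`: `u` is continuous together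
with its partial derivatives `ut = u_t`, `ux = u_x`, `uxx = u_xx` up to the boundary and
satisfies `u_t = L'(u_x) · u_xx` everywhere in the closed rectangle. -/
structure IsClassicalSolution (T : ℝ) (L : ℝ → ℝ) (u ut ux uxx : ℝ → ℝ → ℝ) : Prop where
  cont_u : ContinuousOn (fun p : ℝ × ℝ => u p.1 p.2) (Icc (0:ℝ) 1 ×ˢ Icc (0:ℝ) T)
  cont_ut : ContinuousOn (fun p : ℝ × ℝ => ut p.1 p.2) (Icc (0:ℝ) 1 ×ˢ Icc (0:ℝ) T)
  cont_ux : ContinuousOn (fun p : ℝ × ℝ => ux p.1 p.2) (Icc (0:ℝ) 1 ×ˢ Icc (0:ℝ) T)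
  cont_uxx : ContinuousOn (fun p : ℝ × ℝ => uxx p.1 p.2) (Icc (0:ℝ) 1 ×ˢ Icc (0:ℝ) T)
  time_deriv : ∀ x ∈ Icc (0:ℝ) 1, ∀ t ∈ Icc (0:ℝ) T,
    HasDerivWithinAt (fun s => u x s) (ut x t) (Icc (0:ℝ) T) t
  space_deriv : ∀ x ∈ Icc (0:ℝ) 1, ∀ t ∈ Icc (0:ℝ) T,
    HasDerivWithinAt (fun y => u y t) (ux x t) (Icc (0:ℝ) 1) x
  space_deriv2 : ∀ x ∈ Icc (0:ℝ) 1, ∀ t ∈ Icc (0:ℝ) T,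
    HasDerivWithinAt (fun y => ux y t) (uxx x t) (Icc (0:ℝ) 1) x
  pde : ∀ x ∈ Icc (0:ℝ) 1, ∀ t ∈ Icc (0:ℝ) T,
    ut x t = deriv L (ux x t) * uxx x t

open Function Topology

theorem continuousOn_intervalIntegral_of_continuousOn_prod {f : ℝ → ℝ → ℝ} {a b c d : ℝ}
    (hab : a ≤ b) (hf : ContinuousOn (uncurry f) (Icc a b ×ˢ Icc c d)) :
    ContinuousOn (fun s => ∫ x in a..b, f x s) (Icc c d) := by
  rcases lt_or_ge d c with hdc | hcd
  · simp [Icc_eq_empty_of_lt hdc]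
  set F : ℝ → ℝ → ℝ := fun s x => f (projIcc a b hab x) (projIcc c d hcd s)
  have hF : Continuous (uncurry F) :=
    hf.comp_continuous
      (f := fun p : ℝ × ℝ => ((projIcc a b hab p.2 : ℝ), (projIcc c d hcd p.1 : ℝ)))
      (by fun_prop) fun p => ⟨Subtype.prop _, Subtype.prop _⟩
  refine (intervalIntegral.continuous_parametric_intervalIntegral_of_continuous' hF a b)
    |>.continuousOn.congr fun s hs => intervalIntegral.integral_congr fun x hx => ?_
  rw [uIcc_of_le hab] at hx
  simp [F, projIcc_of_mem _ hx, projIcc_of_mem _ hs]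

theorem hasDerivAt_intervalIntegral_of_continuousOn_prod {f f' : ℝ → ℝ → ℝ} {a b c d s : ℝ}
    (hab : a ≤ b) (hf : ContinuousOn (uncurry f) (Icc a b ×ˢ Icc c d))
    (hf' : ContinuousOn (uncurry f') (Icc a b ×ˢ Icc c d))
    (hderiv : ∀ x ∈ Icc a b, ∀ r ∈ Ioo c d, HasDerivAt (f x) (f' x r) r) (hs : s ∈ Ioo c d) :
    HasDerivAt (fun r => ∫ x in a..b, f x r) (∫ x in a..b, f' x s) s := by
  obtain ⟨C, hC⟩ := (isCompact_Icc.prod isCompact_Icc).exists_bound_of_continuousOn hf'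
  have hsub : uIoc a b ⊆ Icc a b := by
    rw [uIoc_of_le hab]; exact Ioc_subset_Icc_self
  have hmeas : ∀ {g : ℝ → ℝ → ℝ}, ContinuousOn (uncurry g) (Icc a b ×ˢ Icc c d) →
      ∀ r ∈ Icc c d, AEStronglyMeasurable (g · r) (volume.restrict (uIoc a b)) := fun hg r hr =>
    ((hg.uncurry_right r hr).mono hsub).aestronglyMeasurable measurableSet_uIoc
  refine (intervalIntegral.hasDerivAt_integral_of_dominated_loc_of_deriv_le
    (F := fun r x => f x r) (F' := fun r x => f' x r) (bound := fun _ => C)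
    (isOpen_Ioo.mem_nhds hs) ?_
    ((hf.uncurry_right s (Ioo_subset_Icc_self hs)).intervalIntegrable_of_Icc hab)
    (hmeas hf' s (Ioo_subset_Icc_self hs)) ?_ intervalIntegrable_const ?_).2
  · filter_upwards [isOpen_Ioo.mem_nhds hs] with r hr using hmeas hf r (Ioo_subset_Icc_self hr)
  · exact ae_of_all _ fun x hx r hr => hC (x, r) ⟨hsub hx, Ioo_subset_Icc_self hr⟩
  · exact ae_of_all _ fun x hx r hr => hderiv x (hsub hx) r hr

theorem Monotone.sub_mul_sub_nonneg {α : Type*} [Ring α] [LinearOrder α] [IsOrderedRing α]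
    {L : α → α} (hL : Monotone L) (x y : α) :
    0 ≤ (x - y) * (L x - L y) := by
  rcases le_total x y with h | h
  · exact mul_nonneg_of_nonpos_of_nonpos (sub_nonpos.2 h) (sub_nonpos.2 (hL h))
  · exact mul_nonneg (sub_nonneg.2 h) (sub_nonneg.2 (hL h))

theorem le_mul_exp_of_hasDerivAt_le {f f' : ℝ → ℝ} {a b : ℝ}
    (hf : ContinuousOn f (Icc a b)) (hderiv : ∀ x ∈ Ioo a b, HasDerivAt f (f' x) x)
    (hle : ∀ x ∈ Ioo a b, f' x ≤ f x) : ∀ x ∈ Icc a b, f x ≤ f a * Real.exp (x - a) := by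
  have hanti : AntitoneOn (fun x => Real.exp (-x) * f x) (Icc a b) := by
    have hd : ∀ x ∈ Ioo a b, HasDerivAt (fun x => Real.exp (-x) * f x)
        (Real.exp (-x) * (f' x - f x)) x := fun x hx =>
      ((Real.hasDerivAt_exp _).comp x (hasDerivAt_neg x) |>.mul (hderiv x hx)).congr_deriv
        (by simp only [comp_apply]; ring)
    refine antitoneOn_of_deriv_nonpos (convex_Icc a b) (by fun_prop) (fun x hx => ?_)
      fun x hx => ?_ <;> rw [interior_Icc] at hx
    · exact (hd x hx).differentiableAt.differentiableWithinAt
    · rw [(hd x hx).deriv]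
      exact mul_nonpos_of_nonneg_of_nonpos (Real.exp_pos _).le (sub_nonpos.2 (hle x hx))
  intro x hx
  have hmono := hanti (left_mem_Icc.2 (hx.1.trans hx.2)) hx hx.1
  calc f x = Real.exp x * (Real.exp (-x) * f x) := by
        rw [← mul_assoc, ← Real.exp_add, add_neg_cancel, Real.exp_zero, one_mul]
    _ ≤ Real.exp x * (Real.exp (-a) * f a) := by gcongr
    _ = f a * Real.exp (x - a) := by rw [sub_eq_add_neg, Real.exp_add]; ring

theorem le_mul_exp_of_hasDerivAt_le_add {f f' φ : ℝ → ℝ} {a b : ℝ}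
    (hf : ContinuousOn f (Icc a b)) (hderiv : ∀ x ∈ Ioo a b, HasDerivAt f (f' x) x)
    (hφ : ContinuousOn φ (Icc a b)) (hφ_nonneg : ∀ x ∈ Icc a b, 0 ≤ φ x)
    (hle : ∀ x ∈ Ioo a b, f' x ≤ f x + φ x) :
    ∀ x ∈ Icc a b, f x ≤ (f a + ∫ y in a..b, φ y) * Real.exp (x - a) := by
  intro x hx
  have hab : a ≤ b := hx.1.trans hx.2
  have htail_nonneg : ∀ y ∈ Icc a b, 0 ≤ ∫ z in y..b, φ z := fun y hy =>
    intervalIntegral.integral_nonneg hy.2 fun z hz => hφ_nonneg z ⟨hy.1.trans hz.1, hz.2⟩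
  -- `F y = f y + ∫ y..b, φ` satisfies the unforced inequality `F' ≤ F`.
  have hF : ContinuousOn (fun y => f y + ∫ z in y..b, φ z) (Icc a b) := by
    refine hf.add ?_
    have := intervalIntegral.continuousOn_primitive_interval_left (μ := volume) (f := φ)
      (a := a) (b := b) (by rw [uIcc_of_le hab]; exact hφ.integrableOn_Icc)
    rwa [uIcc_of_le hab] at this
  have hF' : ∀ y ∈ Ioo a b, HasDerivAt (fun y => f y + ∫ z in y..b, φ z) (f' y + -φ y) y :=
    fun y hy => (hderiv y hy).add <| intervalIntegral.integral_hasDerivAt_left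
      ((hφ.mono (Icc_subset_Icc hy.1.le le_rfl)).intervalIntegrable_of_Icc hy.2.le)
      (hφ.mono Ioo_subset_Icc_self |>.stronglyMeasurableAtFilter isOpen_Ioo y hy)
      (hφ.continuousAt (Icc_mem_nhds hy.1 hy.2))
  have hgron := le_mul_exp_of_hasDerivAt_le hF hF' (fun y hy => by
    linarith [hle y hy, htail_nonneg y (Ioo_subset_Icc_self hy)]) x hx
  linarith [htail_nonneg x hx]

-- Integrate by parts against `L ∘ p - L c`: the boundary terms vanish and `w' = p - c`.
theorem integral_mul_deriv_comp_nonpos_of_monotone {L w p r : ℝ → ℝ} {a b c : ℝ} (hab : a ≤ b)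
    (hL : Monotone L) (hLc : Continuous L) (hw : ContinuousOn w (Icc a b))
    (hp : ContinuousOn p (Icc a b)) (hr : ContinuousOn r (Icc a b))
    (hw' : ∀ x ∈ Ioo a b, HasDerivAt w (p x - c) x)
    (hLp : ∀ x ∈ Ioo a b, HasDerivAt (L ∘ p) (r x) x) (ha : w a = 0) (hb : w b = 0) :
    ∫ x in a..b, w x * r x ≤ 0 := by
  have hint₁ : IntervalIntegrable (fun x => (p x - c) * (L (p x) - L c)) volume a b :=
    ((hp.sub continuousOn_const).mul ((hLc.comp_continuousOn hp).sub continuousOn_const))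
      |>.intervalIntegrable_of_Icc hab
  have hint₂ : IntervalIntegrable (fun x => w x * r x) volume a b :=
    (hw.mul hr).intervalIntegrable_of_Icc hab
  have hFTC := intervalIntegral.integral_eq_sub_of_hasDerivAt_of_le hab
    (f := fun x => w x * (L (p x) - L c))
    (hw.mul ((hLc.comp_continuousOn hp).sub continuousOn_const))
    (fun x hx => (hw' x hx).mul ((hLp x hx).sub_const (L c))) (hint₁.add hint₂)
  rw [intervalIntegral.integral_add hint₁ hint₂, ha, hb] at hFTC
  have hmono : 0 ≤ ∫ x in a..b, (p x - c) * (L (p x) - L c) :=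
    intervalIntegral.integral_nonneg hab fun x _ => hL.sub_mul_sub_nonneg _ _
  simp only [zero_mul, sub_zero] at hFTC
  linarith

theorem integral_two_mul_sub_le {w q h : ℝ → ℝ} {a b : ℝ} (hab : a ≤ b)
    (hw : ContinuousOn w (Icc a b)) (hq : ContinuousOn q (Icc a b))
    (hh : ContinuousOn h (Icc a b)) (hwq : ∫ x in a..b, w x * q x ≤ 0) :
    ∫ x in a..b, 2 * w x * (q x - h x) ≤ (∫ x in a..b, w x ^ 2) + ∫ x in a..b, h x ^ 2 := by
  have hint : ∀ {f : ℝ → ℝ}, ContinuousOn f (Icc a b) → IntervalIntegrable f volume a b :=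
    fun hf => hf.intervalIntegrable_of_Icc hab
  calc ∫ x in a..b, 2 * w x * (q x - h x)
      ≤ ∫ x in a..b, 2 * (w x * q x) + (w x ^ 2 + h x ^ 2) := by
        refine intervalIntegral.integral_mono_on hab (hint (by fun_prop))
          (hint (by fun_prop)) fun x _ => ?_
        nlinarith [sq_nonneg (w x + h x)]
    _ = 2 * (∫ x in a..b, w x * q x) + ((∫ x in a..b, w x ^ 2) + ∫ x in a..b, h x ^ 2) := by
        rw [intervalIntegral.integral_add (hint (by fun_prop)) (hint (by fun_prop)),
          intervalIntegral.integral_add (hint (by fun_prop)) (hint (by fun_prop)),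
          intervalIntegral.integral_const_mul]
    _ ≤ (∫ x in a..b, w x ^ 2) + ∫ x in a..b, h x ^ 2 := by linarith

def boundaryLift (A B : ℝ → ℝ) (x t : ℝ) : ℝ := (B t - A t) * x + A t

def energy (w : ℝ → ℝ → ℝ) (t : ℝ) : ℝ := ∫ x in (0:ℝ)..1, w x t ^ 2

theorem energy_nonneg (w : ℝ → ℝ → ℝ) (t : ℝ) : 0 ≤ energy w t :=
  intervalIntegral.integral_nonneg zero_le_one fun _ _ => sq_nonneg _

theorem continuousOn_boundaryLift {A B : ℝ → ℝ} {s : Set ℝ} (X : Set ℝ)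
    (hA : ContinuousOn A s) (hB : ContinuousOn B s) :
    ContinuousOn (uncurry (boundaryLift A B)) (X ×ˢ s) := by
  have hsnd : ∀ {g : ℝ → ℝ}, ContinuousOn g s → ContinuousOn (fun p : ℝ × ℝ => g p.2) (X ×ˢ s) :=
    fun hg => hg.comp continuous_snd.continuousOn fun _ hp => hp.2
  exact (((hsnd hB).sub (hsnd hA)).mul continuous_fst.continuousOn).add (hsnd hA)

theorem hasDerivAt_boundaryLift {A B A' B' : ℝ → ℝ} {t : ℝ} (x : ℝ)
    (hA : HasDerivAt A (A' t) t) (hB : HasDerivAt B (B' t) t) :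
    HasDerivAt (boundaryLift A B x) (boundaryLift A' B' x t) t :=
  ((hB.sub hA).mul_const x).add hA

theorem hasDerivAt_boundaryLift_left (A B : ℝ → ℝ) (x t : ℝ) :
    HasDerivAt (boundaryLift A B · t) (B t - A t) x := by
  simpa [boundaryLift] using ((hasDerivAt_id x).const_mul (B t - A t)).add_const (A t)

theorem continuousOn_energy {w : ℝ → ℝ → ℝ} {T : ℝ}
    (hw : ContinuousOn (uncurry w) (Icc 0 1 ×ˢ Icc 0 T)) : ContinuousOn (energy w) (Icc 0 T) :=
  continuousOn_intervalIntegral_of_continuousOn_prod (f := fun x r => w x r ^ 2) zero_le_one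
    (hw.pow 2)

theorem hasDerivAt_energy {w wt : ℝ → ℝ → ℝ} {T s : ℝ}
    (hw : ContinuousOn (uncurry w) (Icc 0 1 ×ˢ Icc 0 T))
    (hwt : ContinuousOn (uncurry wt) (Icc 0 1 ×ˢ Icc 0 T))
    (hderiv : ∀ x ∈ Icc (0:ℝ) 1, ∀ r ∈ Ioo 0 T, HasDerivAt (w x) (wt x r) r) (hs : s ∈ Ioo 0 T) :
    HasDerivAt (energy w) (∫ x in (0:ℝ)..1, 2 * w x s * wt x s) s :=
  hasDerivAt_intervalIntegral_of_continuousOn_prod (c := 0) (d := T) zero_le_one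
    (f := fun x r => w x r ^ 2) (f' := fun x r => 2 * w x r * wt x r)
    (hw.pow 2) ((continuousOn_const.mul hw).mul hwt)
    (fun x hx r hr => ((hderiv x hx r hr).pow 2).congr_deriv (by ring)) hs

namespace IsClassicalSolution

variable {T : ℝ} {L : ℝ → ℝ} {u ut ux uxx : ℝ → ℝ → ℝ}

theorem hasDerivAt_sub_boundaryLift (hsol : IsClassicalSolution T L u ut ux uxx)
    {A B A' B' : ℝ → ℝ} {x s : ℝ} (hx : x ∈ Icc (0:ℝ) 1) (hs : s ∈ Ioo 0 T)
    (hA : HasDerivWithinAt A (A' s) (Icc 0 T) s) (hB : HasDerivWithinAt B (B' s) (Icc 0 T) s) :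
    HasDerivAt (fun r => u x r - boundaryLift A B x r) (ut x s - boundaryLift A' B' x s) s := by
  have hnhds : Icc 0 T ∈ 𝓝 s := Icc_mem_nhds hs.1 hs.2
  exact ((hsol.time_deriv x hx s (Ioo_subset_Icc_self hs)).hasDerivAt hnhds).sub <|
    hasDerivAt_boundaryLift x (hA.hasDerivAt hnhds) (hB.hasDerivAt hnhds)

theorem integral_sub_boundaryLift_mul_time_deriv_nonpos
    (hsol : IsClassicalSolution T L u ut ux uxx) (hL : Differentiable ℝ L)
    (hL' : ∀ p, 0 ≤ deriv L p) {A B : ℝ → ℝ} {s : ℝ} (hs : s ∈ Icc 0 T)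
    (h₀ : u 0 s = A s) (h₁ : u 1 s = B s) :
    ∫ x in (0:ℝ)..1, (u x s - boundaryLift A B x s) * ut x s ≤ 0 := by
  refine integral_mul_deriv_comp_nonpos_of_monotone zero_le_one
    (monotone_of_deriv_nonneg hL hL') hL.continuous
    ((hsol.cont_u.uncurry_right s hs).sub (by fun_prop [boundaryLift]))
    (hsol.cont_ux.uncurry_right s hs) (hsol.cont_ut.uncurry_right s hs) (c := B s - A s)
    (fun x hx => ?_) (fun x hx => ?_) ?_ ?_
  · exact ((hsol.space_deriv x (Ioo_subset_Icc_self hx) s hs).hasDerivAt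
      (Icc_mem_nhds hx.1 hx.2)).sub (hasDerivAt_boundaryLift_left A B x s)
  · rw [hsol.pde x (Ioo_subset_Icc_self hx) s hs]
    exact (hL _).hasDerivAt.comp x
      ((hsol.space_deriv2 x (Ioo_subset_Icc_self hx) s hs).hasDerivAt (Icc_mem_nhds hx.1 hx.2))
  · simp [boundaryLift, h₀]
  · simp [boundaryLift, h₁]

end IsClassicalSolution

theorem energy_estimate_classical_general
    (T : ℝ)
    (L : ℝ → ℝ) (hL : ContDiff ℝ 1 L) (hL' : ∀ p, 0 ≤ deriv L p)
    (A B A' B' : ℝ → ℝ)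
    (hA : ∀ t ∈ Icc (0:ℝ) T, HasDerivWithinAt A (A' t) (Icc (0:ℝ) T) t)
    (hB : ∀ t ∈ Icc (0:ℝ) T, HasDerivWithinAt B (B' t) (Icc (0:ℝ) T) t)
    (hA' : ContinuousOn A' (Icc (0:ℝ) T)) (hB' : ContinuousOn B' (Icc (0:ℝ) T))
    (u ut ux uxx : ℝ → ℝ → ℝ)
    (hsol : IsClassicalSolution T L u ut ux uxx)
    (hbc : ∀ t ∈ Icc (0:ℝ) T, u 0 t = A t ∧ u 1 t = B t) :
    ∀ t ∈ Icc (0:ℝ) T,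
      ∫ x in (0:ℝ)..1, (u x t - ((B t - A t) * x + A t)) ^ 2 ≤
        ((∫ x in (0:ℝ)..1, (u x 0 - ((B 0 - A 0) * x + A 0)) ^ 2) +
          ∫ s in (0:ℝ)..T, ∫ x in (0:ℝ)..1, ((B' s - A' s) * x + A' s) ^ 2) *
          Real.exp T := by
  intro t ht
  change energy (fun x s => u x s - boundaryLift A B x s) t ≤
    (energy (fun x s => u x s - boundaryLift A B x s) 0 +
      ∫ s in (0:ℝ)..T, energy (boundaryLift A' B') s) * Real.exp T
  set v : ℝ → ℝ → ℝ := fun x s => u x s - boundaryLift A B x s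
  set vt : ℝ → ℝ → ℝ := fun x s => ut x s - boundaryLift A' B' x s
  have hAc : ContinuousOn A (Icc 0 T) := fun s hs => (hA s hs).continuousWithinAt
  have hBc : ContinuousOn B (Icc 0 T) := fun s hs => (hB s hs).continuousWithinAt
  have hv : ContinuousOn (uncurry v) (Icc 0 1 ×ˢ Icc 0 T) :=
    hsol.cont_u.sub (continuousOn_boundaryLift _ hAc hBc)
  have hg' : ContinuousOn (uncurry (boundaryLift A' B')) (Icc 0 1 ×ˢ Icc 0 T) :=
    continuousOn_boundaryLift _ hA' hB'
  have hdiff : ∀ s ∈ Ioo (0:ℝ) T,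
      (∫ x in (0:ℝ)..1, 2 * v x s * vt x s) ≤ energy v s + energy (boundaryLift A' B') s :=
    fun s hs => by
    have hs' := Ioo_subset_Icc_self hs
    exact integral_two_mul_sub_le zero_le_one (hv.uncurry_right s hs')
      (hsol.cont_ut.uncurry_right s hs') (hg'.uncurry_right s hs')
      (hsol.integral_sub_boundaryLift_mul_time_deriv_nonpos (hL.differentiable one_ne_zero) hL'
        hs' (hbc s hs').1 (hbc s hs').2)
  have hgron := le_mul_exp_of_hasDerivAt_le_add (continuousOn_energy hv)
    (fun s hs => hasDerivAt_energy (wt := vt) hv (hsol.cont_ut.sub hg')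
      (fun x hx r hr => hsol.hasDerivAt_sub_boundaryLift hx hr
        (hA r (Ioo_subset_Icc_self hr)) (hB r (Ioo_subset_Icc_self hr))) hs)
    (continuousOn_energy hg') (fun s _ => energy_nonneg _ s) hdiff t ht
  rw [sub_zero] at hgron
  refine hgron.trans (mul_le_mul_of_nonneg_left (Real.exp_le_exp.2 ht.2) ?_)
  exact add_nonneg (energy_nonneg _ _)
    (intervalIntegral.integral_nonneg (ht.1.trans ht.2) fun s _ => energy_nonneg _ s)

/-- energy estimate for classical solutions: for `L ∈ C¹` with `L' ≥ 0`,
`A, B ∈ C¹([0,T])` (with derivatives `A'`, `B'`), and `u` a classical solution of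
`u_t = ∂ₓ(L(u_x))` with `u(0,t) = A(t)`, `u(1,t) = B(t)`, setting
`g(x,t) = (B(t) − A(t)) x + A(t)` and `v = u − g`, one has for all `t ∈ [0,T]`:
`‖v(·,t)‖² ≤ (‖v(·,0)‖² + ∬ (∂ₜg)²) · e^T`. -/
theorem energy_estimate_classical
    (T : ℝ) (hT : 0 < T)
    (L : ℝ → ℝ) (hL : ContDiff ℝ 1 L) (hL' : ∀ p, 0 ≤ deriv L p)
    (A B A' B' : ℝ → ℝ)
    (hA : ∀ t ∈ Icc (0:ℝ) T, HasDerivWithinAt A (A' t) (Icc (0:ℝ) T) t)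
    (hB : ∀ t ∈ Icc (0:ℝ) T, HasDerivWithinAt B (B' t) (Icc (0:ℝ) T) t)
    (hA' : ContinuousOn A' (Icc (0:ℝ) T)) (hB' : ContinuousOn B' (Icc (0:ℝ) T))
    (u ut ux uxx : ℝ → ℝ → ℝ)
    (hsol : IsClassicalSolution T L u ut ux uxx)
    (hbc : ∀ t ∈ Icc (0:ℝ) T, u 0 t = A t ∧ u 1 t = B t) :
    ∀ t ∈ Icc (0:ℝ) T,
      ∫ x in (0:ℝ)..1, (u x t - ((B t - A t) * x + A t)) ^ 2 ≤
        ((∫ x in (0:ℝ)..1, (u x 0 - ((B 0 - A 0) * x + A 0)) ^ 2) +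
          ∫ s in (0:ℝ)..T, ∫ x in (0:ℝ)..1, ((B' s - A' s) * x + A' s) ^ 2) *
          Real.exp T :=
  energy_estimate_classical_general T L hL hL' A B A' B' hA hB hA' hB' u ut ux uxx hsol hbc
end
end

section
/- Decay of the variation of the gradient: let L : ℝ → ℝ be smooth with L'(p) > 0 for all p, and let u be a smooth (C^∞ up to the boundary) solution of u_t = ∂ₓ(L(u_x)) on [0,1]×[0,T] whose boundary values u(0,t) and u(1,t) are independent of t. Then for every t ∈ [0,T], ∫₀¹ (u_xx(x,t))₊ dx ≤ ∫₀¹ (u_xx(x,0))₊ dx and ∫₀¹ |u_xx(x,t)| dx ≤ ∫₀¹ |u_xx(x,0)| dx, where (s)₊ = max{s, 0}. -/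
open MeasureTheory Set Filter
open Polynomial Real ContDiff
open scoped ContDiff

noncomputable section

private lemma hasDerivAt_slice1 (F : ℝ → ℝ → ℝ)
    (hF : Differentiable ℝ (fun p : ℝ × ℝ => F p.1 p.2)) (x t : ℝ) :
    HasDerivAt (fun y => F y t) (fderiv ℝ (fun p : ℝ × ℝ => F p.1 p.2) (x, t) (1, 0)) x := by
  have h1 : HasDerivAt (fun y : ℝ => (y, t)) ((1 : ℝ), (0 : ℝ)) x :=
    (hasDerivAt_id x).prodMk (hasDerivAt_const x t)
  exact (hF (x, t)).hasFDerivAt.comp_hasDerivAt x h1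

private lemma hasDerivAt_slice2 (F : ℝ → ℝ → ℝ)
    (hF : Differentiable ℝ (fun p : ℝ × ℝ => F p.1 p.2)) (x t : ℝ) :
    HasDerivAt (fun s => F x s) (fderiv ℝ (fun p : ℝ × ℝ => F p.1 p.2) (x, t) (0, 1)) t := by
  have h1 : HasDerivAt (fun s : ℝ => (x, s)) ((0 : ℝ), (1 : ℝ)) t :=
    (hasDerivAt_const t x).prodMk (hasDerivAt_id t)
  exact (hF (x, t)).hasFDerivAt.comp_hasDerivAt t h1

private lemma contDiff_fderiv_apply (F : ℝ → ℝ → ℝ)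
    (hF : ContDiff ℝ (⊤ : ℕ∞) (fun p : ℝ × ℝ => F p.1 p.2)) (e : ℝ × ℝ) :
    ContDiff ℝ (⊤ : ℕ∞) (fun p : ℝ × ℝ => fderiv ℝ (fun p : ℝ × ℝ => F p.1 p.2) p e) :=
  (hF.fderiv_right (by simp)).clm_apply contDiff_const

private lemma contDiff_derivFst (F : ℝ → ℝ → ℝ)
    (hF : ContDiff ℝ (⊤ : ℕ∞) (fun p : ℝ × ℝ => F p.1 p.2)) :
    ContDiff ℝ (⊤ : ℕ∞) (fun p : ℝ × ℝ => deriv (fun y => F y p.2) p.1) := by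
  have : (fun p : ℝ × ℝ => deriv (fun y => F y p.2) p.1)
      = fun p : ℝ × ℝ => fderiv ℝ (fun p : ℝ × ℝ => F p.1 p.2) p (1, 0) := by
    funext p
    have := (hasDerivAt_slice1 F (hF.differentiable (by simp)) p.1 p.2).deriv
    simpa using this
  rw [this]
  exact contDiff_fderiv_apply F hF (1, 0)

private lemma contDiff_derivSnd (F : ℝ → ℝ → ℝ)
    (hF : ContDiff ℝ (⊤ : ℕ∞) (fun p : ℝ × ℝ => F p.1 p.2)) :
    ContDiff ℝ (⊤ : ℕ∞) (fun p : ℝ × ℝ => deriv (fun s => F p.1 s) p.2) := by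
  have : (fun p : ℝ × ℝ => deriv (fun s => F p.1 s) p.2)
      = fun p : ℝ × ℝ => fderiv ℝ (fun p : ℝ × ℝ => F p.1 p.2) p (0, 1) := by
    funext p
    have := (hasDerivAt_slice2 F (hF.differentiable (by simp)) p.1 p.2).deriv
    simpa using this
  rw [this]
  exact contDiff_fderiv_apply F hF (0, 1)

private lemma clairaut (F : ℝ → ℝ → ℝ)
    (hF : ContDiff ℝ (⊤ : ℕ∞) (fun p : ℝ × ℝ => F p.1 p.2)) (x t : ℝ) :
    deriv (fun s => deriv (fun y => F y s) x) t
      = deriv (fun y => deriv (fun s => F y s) t) x := by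
  set Fu : ℝ × ℝ → ℝ := fun p => F p.1 p.2 with hFu
  set f' : ℝ × ℝ → (ℝ × ℝ →L[ℝ] ℝ) := fun p => fderiv ℝ Fu p with hf'
  have hdiff : Differentiable ℝ Fu := hF.differentiable (by simp)
  have hf'd : Differentiable ℝ f' := (hF.fderiv_right (m := (⊤ : ℕ∞)) (by simp)).differentiable (by simp)
  set f'' : ℝ × ℝ →L[ℝ] ℝ × ℝ →L[ℝ] ℝ := fderiv ℝ f' (x, t) with hf''
  have hsymm : ∀ a b : ℝ × ℝ, f'' a b = f'' b a := by
    intro a b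
    exact second_derivative_symmetric (fun y => (hdiff y).hasFDerivAt)
      (hf'd (x, t)).hasFDerivAt a b
  have key : ∀ (e : ℝ × ℝ) (γ : ℝ → ℝ × ℝ) (γ' : ℝ × ℝ) (r : ℝ),
      HasDerivAt γ γ' r →
      HasDerivAt (fun s => f' (γ s) e) ((fderiv ℝ f' (γ r)) γ' e) r := by
    intro e γ γ' r hγ
    have h1 : HasDerivAt (fun s => f' (γ s)) ((fderiv ℝ f' (γ r)) γ') r :=
      (hf'd (γ r)).hasFDerivAt.comp_hasDerivAt r hγ
    have h2 := h1.clm_apply (hasDerivAt_const r e)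
    simpa using h2
  have hL : deriv (fun s => deriv (fun y => F y s) x) t = f'' (0, 1) (1, 0) := by
    have hcongr : (fun s => deriv (fun y => F y s) x) = fun s => f' (x, s) (1, 0) := by
      funext s
      exact (hasDerivAt_slice1 F hdiff x s).deriv
    rw [hcongr]
    have hγ : HasDerivAt (fun s : ℝ => (x, s)) ((0 : ℝ), (1 : ℝ)) t :=
      (hasDerivAt_const t x).prodMk (hasDerivAt_id t)
    exact (key (1, 0) _ _ t hγ).deriv
  have hR : deriv (fun y => deriv (fun s => F y s) t) x = f'' (1, 0) (0, 1) := by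
    have hcongr : (fun y => deriv (fun s => F y s) t) = fun y => f' (y, t) (0, 1) := by
      funext y
      exact (hasDerivAt_slice2 F hdiff y t).deriv
    rw [hcongr]
    have hγ : HasDerivAt (fun y : ℝ => (y, t)) ((1 : ℝ), (0 : ℝ)) x :=
      (hasDerivAt_id x).prodMk (hasDerivAt_const x t)
    exact (key (0, 1) _ _ x hγ).deriv
  rw [hL, hR, hsymm]

private lemma psi_hasDerivAt (x : ℝ) :
    HasDerivAt expNegInvGlue (x⁻¹ ^ 2 * expNegInvGlue x) x := by
  have h := expNegInvGlue.hasDerivAt_polynomial_eval_inv_mul (1 : ℝ[X]) x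
  simpa using h

private lemma psi_le_one (x : ℝ) : expNegInvGlue x ≤ 1 := by
  rcases le_or_gt x 0 with h | h
  · rw [expNegInvGlue.zero_of_nonpos h]; norm_num
  · rw [expNegInvGlue, if_neg (not_le.2 h)]
    exact Real.exp_le_one_iff.2 (neg_nonpos.2 (inv_nonneg.2 h.le))

private lemma psi_ge (y : ℝ) (hy : 0 < y) : 1 - y⁻¹ ≤ expNegInvGlue y := by
  rw [expNegInvGlue, if_neg (not_le.2 hy)]
  have := Real.add_one_le_exp (-y⁻¹)
  linarith

private lemma psi_cont : Continuous expNegInvGlue :=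
  expNegInvGlue.contDiff (n := 0).continuous

private lemma psid_cont : Continuous (fun x : ℝ => x⁻¹ ^ 2 * expNegInvGlue x) := by
  have h := expNegInvGlue.continuous_polynomial_eval_inv_mul (X ^ 2 : ℝ[X])
  simpa using h

/-- The primitive of `expNegInvGlue`. -/
private def Phi (r : ℝ) : ℝ := ∫ y in (0:ℝ)..r, expNegInvGlue y

private lemma Phi_hasDerivAt (r : ℝ) : HasDerivAt Phi (expNegInvGlue r) r := by
  refine intervalIntegral.integral_hasDerivAt_right
    (psi_cont.intervalIntegrable _ _) ?_ psi_cont.continuousAt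
  exact psi_cont.stronglyMeasurableAtFilter _ _

private lemma Phi_of_nonpos {r : ℝ} (hr : r ≤ 0) : Phi r = 0 := by
  rw [Phi, intervalIntegral.integral_symm]
  have : EqOn (fun y : ℝ => expNegInvGlue y) (fun _ => (0:ℝ)) (uIcc r 0) := by
    intro y hy
    rw [uIcc_of_le hr] at hy
    exact expNegInvGlue.zero_of_nonpos hy.2
  rw [intervalIntegral.integral_congr this]
  simp

private lemma Phi_nonneg {r : ℝ} : 0 ≤ Phi r := by
  rcases le_or_gt r 0 with h | h
  · rw [Phi_of_nonpos h]
  · exact intervalIntegral.integral_nonneg h.le (fun y _ => expNegInvGlue.nonneg y)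

private lemma Phi_le {r : ℝ} (hr : 0 ≤ r) : Phi r ≤ r := by
  have h := intervalIntegral.integral_mono_on (μ := volume) hr
    (psi_cont.intervalIntegrable 0 r) (intervalIntegrable_const (c := (1:ℝ)))
    (fun y _ => psi_le_one y)
  simpa [Phi] using h

private lemma Phi_lb {r : ℝ} (hr : 0 ≤ r) : r - 2 * Real.sqrt r ≤ Phi r := by
  rcases le_or_gt r 1 with h1 | h1
  · have h2 : r ≤ Real.sqrt r := by
      nlinarith [Real.sq_sqrt hr, Real.sqrt_nonneg r, Real.sqrt_le_sqrt h1, Real.sqrt_one]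
    nlinarith [Phi_nonneg (r := r), Real.sqrt_nonneg r]
  · set a := Real.sqrt r with ha
    have ha1 : 1 ≤ a := by
      rw [ha]; rw [show (1:ℝ) = Real.sqrt 1 by simp]
      exact Real.sqrt_le_sqrt h1.le
    have ha0 : 0 < a := lt_of_lt_of_le one_pos ha1
    have har : a ≤ r := by nlinarith [Real.sq_sqrt hr]
    have hsplit : Phi r = (∫ y in (0:ℝ)..a, expNegInvGlue y) + ∫ y in a..r, expNegInvGlue y := by
      rw [Phi, ← intervalIntegral.integral_add_adjacent_intervals
        (psi_cont.intervalIntegrable 0 a) (psi_cont.intervalIntegrable a r)]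
    have h01 : 0 ≤ ∫ y in (0:ℝ)..a, expNegInvGlue y :=
      intervalIntegral.integral_nonneg ha0.le (fun y _ => expNegInvGlue.nonneg y)
    have h02 : ∫ y in a..r, (1 - a⁻¹) ≤ ∫ y in a..r, expNegInvGlue y := by
      refine intervalIntegral.integral_mono_on har (intervalIntegrable_const)
        (psi_cont.intervalIntegrable a r) (fun y hy => ?_)
      have hya : a ≤ y := hy.1
      have hy0 : 0 < y := lt_of_lt_of_le ha0 hya
      refine le_trans ?_ (psi_ge y hy0)
      have : y⁻¹ ≤ a⁻¹ := by
        apply inv_anti₀ ha0 hya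
      linarith
    have h03 : ∫ y in a..r, (1 - a⁻¹) = (r - a) * (1 - a⁻¹) := by simp; ring
    have hra : r * a⁻¹ = a := by
      rw [ha, ← div_eq_mul_inv]
      exact Real.div_sqrt
    have haa : a * a⁻¹ = 1 := mul_inv_cancel₀ ha0.ne'
    nlinarith [hsplit, h01, h02, h03]

/-- smooth approximation of `max · 0` -/
private def phiE (ε s : ℝ) : ℝ := ε * Phi (s / ε)
private def phiD (ε s : ℝ) : ℝ := expNegInvGlue (s / ε)
private def phiD2 (ε s : ℝ) : ℝ := (s / ε)⁻¹ ^ 2 * expNegInvGlue (s / ε) / ε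

private lemma div_hasDerivAt (ε s : ℝ) : HasDerivAt (fun z : ℝ => z / ε) (1 / ε) s := by
  simpa using (hasDerivAt_id s).div_const ε

private lemma phiE_hasDerivAt {ε : ℝ} (hε : 0 < ε) (s : ℝ) :
    HasDerivAt (phiE ε) (phiD ε s) s := by
  have h := ((Phi_hasDerivAt (s / ε)).comp s (div_hasDerivAt ε s)).const_mul ε
  have he : ε * (expNegInvGlue (s / ε) * (1 / ε)) = phiD ε s := by
    rw [phiD]; field_simp
  rw [he] at h
  exact h

private lemma phiD_hasDerivAt {ε : ℝ} (hε : 0 < ε) (s : ℝ) :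
    HasDerivAt (phiD ε) (phiD2 ε s) s := by
  have h := (psi_hasDerivAt (s / ε)).comp s (div_hasDerivAt ε s)
  have he : (s / ε)⁻¹ ^ 2 * expNegInvGlue (s / ε) * (1 / ε) = phiD2 ε s := by
    rw [phiD2]; ring
  rw [he] at h
  exact h

private lemma phiD_nonneg (ε s : ℝ) : 0 ≤ phiD ε s := expNegInvGlue.nonneg _
private lemma phiD_zero (ε : ℝ) : phiD ε 0 = 0 := by simp [phiD, expNegInvGlue.zero]

private lemma phiD2_nonneg {ε : ℝ} (hε : 0 < ε) (s : ℝ) : 0 ≤ phiD2 ε s := by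
  rw [phiD2]
  exact div_nonneg (mul_nonneg (sq_nonneg _) (expNegInvGlue.nonneg _)) hε.le

private lemma phiD2_sq {ε : ℝ} (hε : 0 < ε) (s : ℝ) : phiD2 ε s * s ^ 2 ≤ ε := by
  rcases eq_or_ne s 0 with rfl | hs
  · simpa [phiD2] using hε.le
  · have h : phiD2 ε s * s ^ 2 = expNegInvGlue (s / ε) * ε := by
      rw [phiD2]
      field_simp
    rw [h]
    calc expNegInvGlue (s / ε) * ε ≤ 1 * ε := by
          exact mul_le_mul_of_nonneg_right (psi_le_one _) hε.le
      _ = ε := one_mul ε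

private lemma phiD_cont (ε : ℝ) : Continuous (phiD ε) :=
  psi_cont.comp (continuous_id.div_const ε)

private lemma phiD2_cont (ε : ℝ) : Continuous (phiD2 ε) :=
  ((psid_cont.comp (continuous_id.div_const ε)).div_const ε)

private lemma phiE_cont {ε : ℝ} (hε : 0 < ε) : Continuous (phiE ε) :=
  continuous_iff_continuousAt.2 fun s => (phiE_hasDerivAt hε s).continuousAt

private lemma phiE_le_max {ε : ℝ} (hε : 0 < ε) (s : ℝ) : phiE ε s ≤ max s 0 := by
  rcases le_or_gt s 0 with h | h
  · rw [phiE, Phi_of_nonpos (div_nonpos_iff.2 (Or.inr ⟨h, hε.le⟩))]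
    simp
  · have h1 : Phi (s / ε) ≤ s / ε := Phi_le (by positivity)
    have : phiE ε s ≤ ε * (s / ε) := by
      rw [phiE]
      exact mul_le_mul_of_nonneg_left h1 hε.le
    rw [mul_div_cancel₀ _ hε.ne'] at this
    exact this.trans (le_max_left s 0)

private lemma phiE_nonneg {ε : ℝ} (hε : 0 < ε) (s : ℝ) : 0 ≤ phiE ε s :=
  mul_nonneg hε.le Phi_nonneg

private lemma phiE_ge {ε W : ℝ} (hε : 0 < ε) {s : ℝ} (hW : |s| ≤ W) :
    max s 0 - 2 * Real.sqrt (ε * W) ≤ phiE ε s := by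
  have hW0 : 0 ≤ W := le_trans (abs_nonneg s) hW
  rcases le_or_gt s 0 with h | h
  · have : max s 0 = 0 := max_eq_right h
    rw [this]
    have := phiE_nonneg hε s
    have := Real.sqrt_nonneg (ε * W)
    linarith
  · have hsW : s ≤ W := le_trans (le_abs_self s) hW
    have hr : (0:ℝ) ≤ s / ε := by positivity
    have h1 : s / ε - 2 * Real.sqrt (s / ε) ≤ Phi (s / ε) := Phi_lb hr
    have h2 : s - 2 * (ε * Real.sqrt (s / ε)) ≤ phiE ε s := by
      rw [phiE]
      have := mul_le_mul_of_nonneg_left h1 hε.le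
      calc s - 2 * (ε * Real.sqrt (s / ε)) = ε * (s / ε - 2 * Real.sqrt (s / ε)) := by
            field_simp
        _ ≤ ε * Phi (s / ε) := this
    have h3 : ε * Real.sqrt (s / ε) = Real.sqrt (ε * s) := by
      rw [show ε * Real.sqrt (s / ε) = Real.sqrt (ε ^ 2) * Real.sqrt (s / ε) by
            rw [Real.sqrt_sq hε.le],
        ← Real.sqrt_mul (sq_nonneg ε)]
      congr 1
      field_simp
    have h4 : Real.sqrt (ε * s) ≤ Real.sqrt (ε * W) :=
      Real.sqrt_le_sqrt (mul_le_mul_of_nonneg_left hsW hε.le)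
    rw [max_eq_left h.le]
    rw [h3] at h2
    linarith

private def Dx (F : ℝ → ℝ → ℝ) : ℝ → ℝ → ℝ := fun x t => deriv (fun y => F y t) x
private def Dt (F : ℝ → ℝ → ℝ) : ℝ → ℝ → ℝ := fun x t => deriv (fun s => F x s) t

private lemma contDiff_Dx {F : ℝ → ℝ → ℝ} (hF : ContDiff ℝ (⊤ : ℕ∞) (fun p : ℝ × ℝ => F p.1 p.2)) :
    ContDiff ℝ (⊤ : ℕ∞) (fun p : ℝ × ℝ => Dx F p.1 p.2) := contDiff_derivFst F hF

private lemma contDiff_Dt {F : ℝ → ℝ → ℝ} (hF : ContDiff ℝ (⊤ : ℕ∞) (fun p : ℝ × ℝ => F p.1 p.2)) :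
    ContDiff ℝ (⊤ : ℕ∞) (fun p : ℝ × ℝ => Dt F p.1 p.2) := contDiff_derivSnd F hF

private lemma contDiff_slice_x {F : ℝ → ℝ → ℝ} (hF : ContDiff ℝ (⊤ : ℕ∞) (fun p : ℝ × ℝ => F p.1 p.2))
    (t : ℝ) : ContDiff ℝ (⊤ : ℕ∞) (fun y => F y t) := hF.comp (contDiff_id.prodMk contDiff_const)

private lemma contDiff_slice_t {F : ℝ → ℝ → ℝ} (hF : ContDiff ℝ (⊤ : ℕ∞) (fun p : ℝ × ℝ => F p.1 p.2))
    (x : ℝ) : ContDiff ℝ (⊤ : ℕ∞) (fun s => F x s) := hF.comp (contDiff_const.prodMk contDiff_id)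

private lemma hasDerivAt_Dx {F : ℝ → ℝ → ℝ} (hF : ContDiff ℝ (⊤ : ℕ∞) (fun p : ℝ × ℝ => F p.1 p.2))
    (x t : ℝ) : HasDerivAt (fun y => F y t) (Dx F x t) x :=
  (((contDiff_slice_x hF t).differentiable (by simp)) x).hasDerivAt

private lemma hasDerivAt_Dt {F : ℝ → ℝ → ℝ} (hF : ContDiff ℝ (⊤ : ℕ∞) (fun p : ℝ × ℝ => F p.1 p.2))
    (x t : ℝ) : HasDerivAt (fun s => F x s) (Dt F x t) t :=
  (((contDiff_slice_t hF x).differentiable (by simp)) t).hasDerivAt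

private lemma Dt_Dx {F : ℝ → ℝ → ℝ} (hF : ContDiff ℝ (⊤ : ℕ∞) (fun p : ℝ × ℝ => F p.1 p.2))
    (x t : ℝ) : Dt (Dx F) x t = Dx (Dt F) x t := clairaut F hF x t

private lemma Dt_Dx_Dx {F : ℝ → ℝ → ℝ} (hF : ContDiff ℝ (⊤ : ℕ∞) (fun p : ℝ × ℝ => F p.1 p.2))
    (x t : ℝ) : Dt (Dx (Dx F)) x t = Dx (Dx (Dt F)) x t := by
  have h1 : Dt (Dx (Dx F)) x t = Dx (Dt (Dx F)) x t := Dt_Dx (contDiff_Dx hF) x t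
  rw [h1]
  show deriv (fun y => Dt (Dx F) y t) x = deriv (fun y => Dx (Dt F) y t) x
  congr 1
  funext y
  exact Dt_Dx hF y t

private lemma posPart_decay
    (T : ℝ) (hT : 0 < T)
    (L : ℝ → ℝ) (hL : ContDiff ℝ (⊤ : ℕ∞) L) (hL' : ∀ p, 0 < deriv L p)
    (u : ℝ → ℝ → ℝ) (hu : ContDiff ℝ (⊤ : ℕ∞) (fun p : ℝ × ℝ => u p.1 p.2))
    (hpde : ∀ x ∈ Icc (0:ℝ) 1, ∀ t ∈ Icc (0:ℝ) T,
      deriv (fun s => u x s) t =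
        deriv L (deriv (fun y => u y t) x) * deriv (fun y => deriv (fun z => u z t) y) x)
    (hbc : ∀ t ∈ Icc (0:ℝ) T, u 0 t = u 0 0 ∧ u 1 t = u 1 0) :
    ∀ t ∈ Icc (0:ℝ) T,
      ∫ x in (0:ℝ)..1, max (deriv (fun y => deriv (fun z => u z t) y) x) 0 ≤
        ∫ x in (0:ℝ)..1, max (deriv (fun y => deriv (fun z => u z 0) y) x) 0 := by
  intro t ht
  obtain ⟨ht0, htT⟩ := ht
  have h0T : (0:ℝ) ∈ Icc (0:ℝ) T := ⟨le_refl 0, hT.le⟩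
  have h01l : (0:ℝ) ∈ Icc (0:ℝ) 1 := ⟨le_refl 0, zero_le_one⟩
  have h01r : (1:ℝ) ∈ Icc (0:ℝ) 1 := ⟨zero_le_one, le_refl 1⟩
  -- smoothness registry
  have hV : ContDiff ℝ (⊤ : ℕ∞) (fun p : ℝ × ℝ => Dx u p.1 p.2) := contDiff_Dx hu
  have hW : ContDiff ℝ (⊤ : ℕ∞) (fun p : ℝ × ℝ => Dx (Dx u) p.1 p.2) := contDiff_Dx hV
  have hWX : ContDiff ℝ (⊤ : ℕ∞) (fun p : ℝ × ℝ => Dx (Dx (Dx u)) p.1 p.2) := contDiff_Dx hW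
  have hQ : ContDiff ℝ (⊤ : ℕ∞) (fun p : ℝ × ℝ => Dt u p.1 p.2) := contDiff_Dt hu
  have hG : ContDiff ℝ (⊤ : ℕ∞) (fun p : ℝ × ℝ => Dx (Dt u) p.1 p.2) := contDiff_Dx hQ
  have hH : ContDiff ℝ (⊤ : ℕ∞) (fun p : ℝ × ℝ => Dx (Dx (Dt u)) p.1 p.2) := contDiff_Dx hG
  have hle1 : (1 : WithTop ℕ∞) ≤ ∞ := by norm_num
  have hL1 : ContDiff ℝ ∞ (deriv L) := (contDiff_infty_iff_deriv.1 (hL.of_le (by simp))).2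
  have hL2 : ContDiff ℝ ∞ (deriv (deriv L)) := (contDiff_infty_iff_deriv.1 hL1).2
  have hwt : ∀ x s : ℝ, Dt (Dx (Dx u)) x s = Dx (Dx (Dt u)) x s := Dt_Dx_Dx hu
  have hpde' : ∀ x ∈ Icc (0:ℝ) 1, ∀ s ∈ Icc (0:ℝ) T,
      Dt u x s = deriv L (Dx u x s) * Dx (Dx u) x s := hpde
  -- `w` vanishes on the lateral boundary
  have hqbc : ∀ z : ℝ, (z = 0 ∨ z = 1) → ∀ s ∈ Icc (0:ℝ) T, Dt u z s = 0 := by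
    intro z hz s hs
    have hcs : ∀ r ∈ Icc (0:ℝ) T, u z r = u z 0 := by
      intro r hr
      rcases hz with rfl | rfl
      · exact (hbc r hr).1
      · exact (hbc r hr).2
    have hcont : Continuous (fun r => Dt u z r) := (contDiff_slice_t hQ z).continuous
    have hopen : EqOn (fun r => Dt u z r) (fun _ => (0:ℝ)) (Ioo (0:ℝ) T) := by
      intro r hr
      have hev : (fun r' => u z r') =ᶠ[nhds r] (fun _ => u z 0) :=
        eventually_of_mem (Ioo_mem_nhds hr.1 hr.2)
          (fun y hy => hcs y (Ioo_subset_Icc_self hy))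
      show deriv (fun r' => u z r') r = 0
      rw [hev.deriv_eq]
      simp
    have hclos := hopen.closure hcont continuous_const
    rw [closure_Ioo hT.ne] at hclos
    exact hclos hs
  have hwbc : ∀ z : ℝ, (z = 0 ∨ z = 1) → ∀ s ∈ Icc (0:ℝ) T, Dx (Dx u) z s = 0 := by
    intro z hz s hs
    have h1 : Dt u z s = 0 := hqbc z hz s hs
    have hz1 : z ∈ Icc (0:ℝ) 1 := by rcases hz with rfl | rfl <;> simp [h01l, h01r]
    have h2 := hpde' z hz1 s hs
    rw [h1] at h2
    rcases mul_eq_zero.1 h2.symm with h3 | h3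
    · exact absurd h3 (hL' _).ne'
    · exact h3
  -- identity for `Dx (Dt u)` on the rectangle
  have hGid : ∀ s ∈ Icc (0:ℝ) T, ∀ x ∈ Icc (0:ℝ) 1,
      Dx (Dt u) x s = deriv (deriv L) (Dx u x s) * (Dx (Dx u) x s) ^ 2
        + deriv L (Dx u x s) * Dx (Dx (Dx u)) x s := by
    intro s hs
    have hcont1 : Continuous (fun x => Dx (Dt u) x s) := (contDiff_slice_x hG s).continuous
    have hcont2 : Continuous (fun x => deriv (deriv L) (Dx u x s) * (Dx (Dx u) x s) ^ 2
        + deriv L (Dx u x s) * Dx (Dx (Dx u)) x s) := by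
      have hv := (contDiff_slice_x hV s).continuous
      have hw := (contDiff_slice_x hW s).continuous
      have hwx := (contDiff_slice_x hWX s).continuous
      exact ((hL2.continuous.comp hv).mul (hw.pow 2)).add ((hL1.continuous.comp hv).mul hwx)
    have hopen : EqOn (fun x => Dx (Dt u) x s)
        (fun x => deriv (deriv L) (Dx u x s) * (Dx (Dx u) x s) ^ 2
          + deriv L (Dx u x s) * Dx (Dx (Dx u)) x s) (Ioo (0:ℝ) 1) := by
      intro x hx
      have hev : (fun y => Dt u y s) =ᶠ[nhds x]
          (fun y => deriv L (Dx u y s) * Dx (Dx u) y s) :=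
        eventually_of_mem (Ioo_mem_nhds hx.1 hx.2)
          (fun y hy => hpde' y (Ioo_subset_Icc_self hy) s hs)
      have h1 : HasDerivAt (fun y => deriv L (Dx u y s))
          (deriv (deriv L) (Dx u x s) * Dx (Dx u) x s) x := by
        have houter : HasDerivAt (deriv L) (deriv (deriv L) (Dx u x s)) (Dx u x s) :=
          ((hL1.differentiable (by simp)) _).hasDerivAt
        exact houter.comp x (hasDerivAt_Dx hV x s)
      have hder := h1.mul (hasDerivAt_Dx hW x s)
      have h2 : Dx (Dt u) x s = deriv (fun y => deriv L (Dx u y s) * Dx (Dx u) y s) x :=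
        Filter.EventuallyEq.deriv_eq hev
      show Dx (Dt u) x s = _
      rw [h2, show (fun y => deriv L (Dx u y s) * Dx (Dx u) y s) = ((fun y => deriv L (Dx u y s)) * fun y => Dx (Dx u) y s) from rfl, hder.deriv]
      ring
    have hclos := hopen.closure hcont1 hcont2
    rw [closure_Ioo (by norm_num : (0:ℝ) ≠ 1)] at hclos
    exact fun x hx => hclos hx
  -- uniform bounds on the compact rectangle
  obtain ⟨K, hK0, hKb⟩ : ∃ K, 0 ≤ K ∧ ∀ x ∈ Icc (0:ℝ) 1, ∀ s ∈ Icc (0:ℝ) T,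
      |deriv (deriv L) (Dx u x s) * Dx (Dx (Dx u)) x s| ≤ K := by
    have hc : ContinuousOn
        (fun p : ℝ × ℝ => deriv (deriv L) (Dx u p.1 p.2) * Dx (Dx (Dx u)) p.1 p.2)
        (Icc (0:ℝ) 1 ×ˢ Icc (0:ℝ) T) :=
      ((hL2.continuous.comp hV.continuous).mul hWX.continuous).continuousOn
    obtain ⟨C, hC⟩ := (isCompact_Icc.prod isCompact_Icc).exists_bound_of_continuousOn hc
    refine ⟨max C 0, le_max_right _ _, fun x hx s hs => ?_⟩
    have := hC (x, s) ⟨hx, hs⟩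
    rw [Real.norm_eq_abs] at this
    exact this.trans (le_max_left _ _)
  obtain ⟨Wb, hWb0, hWbb⟩ : ∃ Wb, 0 ≤ Wb ∧ ∀ x ∈ Icc (0:ℝ) 1, ∀ s ∈ Icc (0:ℝ) T,
      |Dx (Dx u) x s| ≤ Wb := by
    have hc : ContinuousOn (fun p : ℝ × ℝ => Dx (Dx u) p.1 p.2)
        (Icc (0:ℝ) 1 ×ˢ Icc (0:ℝ) T) := hW.continuous.continuousOn
    obtain ⟨C, hC⟩ := (isCompact_Icc.prod isCompact_Icc).exists_bound_of_continuousOn hc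
    refine ⟨max C 0, le_max_right _ _, fun x hx s hs => ?_⟩
    have := hC (x, s) ⟨hx, hs⟩
    rw [Real.norm_eq_abs] at this
    exact this.trans (le_max_left _ _)
  -- the main estimate, for a fixed mollification parameter ε
  have main : ∀ ε : ℝ, 0 < ε →
      (∫ x in (0:ℝ)..1, max (Dx (Dx u) x t) 0) ≤
        (∫ x in (0:ℝ)..1, max (Dx (Dx u) x 0) 0)
          + (2 * Real.sqrt (ε * Wb) + ε * K * T) := by
    intro ε hε
    have hgcont : Continuous
        (fun p : ℝ × ℝ => phiD ε (Dx (Dx u) p.1 p.2) * Dx (Dx (Dt u)) p.1 p.2) :=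
      ((phiD_cont ε).comp hW.continuous).mul hH.continuous
    -- the space estimate
    have hspace : ∀ s ∈ Icc (0:ℝ) T,
        (∫ x in (0:ℝ)..1, phiD ε (Dx (Dx u) x s) * Dx (Dx (Dt u)) x s) ≤ ε * K := by
      intro s hs
      have hu' : ∀ x ∈ uIcc (0:ℝ) 1, HasDerivAt (fun y => phiD ε (Dx (Dx u) y s))
          (phiD2 ε (Dx (Dx u) x s) * Dx (Dx (Dx u)) x s) x := fun x _ =>
        (phiD_hasDerivAt hε _).comp x (hasDerivAt_Dx hW x s)
      have hv' : ∀ x ∈ uIcc (0:ℝ) 1, HasDerivAt (fun y => Dx (Dt u) y s)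
          (Dx (Dx (Dt u)) x s) x := fun x _ => hasDerivAt_Dx hG x s
      have hi1 : IntervalIntegrable
          (fun y => phiD2 ε (Dx (Dx u) y s) * Dx (Dx (Dx u)) y s) volume 0 1 :=
        (((phiD2_cont ε).comp (contDiff_slice_x hW s).continuous).mul
          (contDiff_slice_x hWX s).continuous).intervalIntegrable _ _
      have hi2 : IntervalIntegrable (fun y => Dx (Dx (Dt u)) y s) volume 0 1 :=
        (contDiff_slice_x hH s).continuous.intervalIntegrable _ _
      have hibp := intervalIntegral.integral_mul_deriv_eq_deriv_mul hu' hv' hi1 hi2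
      rw [hwbc 1 (Or.inr rfl) s hs, hwbc 0 (Or.inl rfl) s hs, phiD_zero ε] at hibp
      simp only [zero_mul, sub_zero, zero_sub] at hibp
      rw [hibp, ← intervalIntegral.integral_neg]
      have hmono : (∫ x in (0:ℝ)..1,
            -(phiD2 ε (Dx (Dx u) x s) * Dx (Dx (Dx u)) x s * Dx (Dt u) x s))
          ≤ ∫ _x in (0:ℝ)..1, ε * K := by
        have hc3 : Continuous
            (fun x : ℝ => -(phiD2 ε (Dx (Dx u) x s) * Dx (Dx (Dx u)) x s * Dx (Dt u) x s)) :=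
          ((((phiD2_cont ε).comp (contDiff_slice_x hW s).continuous).mul
            (contDiff_slice_x hWX s).continuous).mul
              (contDiff_slice_x hG s).continuous).neg
        apply intervalIntegral.integral_mono_on zero_le_one
          (hc3.intervalIntegrable _ _) intervalIntegrable_const
        intro x hx
        rw [hGid s hs x hx]
        have hA : 0 ≤ phiD2 ε (Dx (Dx u) x s) := phiD2_nonneg hε _
        have hA2 : phiD2 ε (Dx (Dx u) x s) * (Dx (Dx u) x s) ^ 2 ≤ ε := phiD2_sq hε _
        obtain ⟨hK1, hK2⟩ := abs_le.1 (hKb x hx s hs)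
        have hLp : 0 < deriv L (Dx u x s) := hL' _
        have h5 : 0 ≤ phiD2 ε (Dx (Dx u) x s) * (Dx (Dx u) x s) ^ 2 :=
          mul_nonneg hA (sq_nonneg _)
        have h6 : phiD2 ε (Dx (Dx u) x s) * (Dx (Dx u) x s) ^ 2 * K ≤ ε * K :=
          mul_le_mul_of_nonneg_right hA2 hK0
        have h8 : 0 ≤ phiD2 ε (Dx (Dx u) x s) * deriv L (Dx u x s)
            * (Dx (Dx (Dx u)) x s) ^ 2 :=
          mul_nonneg (mul_nonneg hA hLp.le) (sq_nonneg _)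
        have h9 : 0 ≤ (phiD2 ε (Dx (Dx u) x s) * (Dx (Dx u) x s) ^ 2)
            * (K + deriv (deriv L) (Dx u x s) * Dx (Dx (Dx u)) x s) :=
          mul_nonneg h5 (by linarith)
        nlinarith [h6, h8, h9]
      calc _ ≤ ∫ _x in (0:ℝ)..1, ε * K := hmono
        _ = ε * K := by simp
    -- fundamental theorem of calculus in time
    have hFTC : ∀ x : ℝ, phiE ε (Dx (Dx u) x t) - phiE ε (Dx (Dx u) x 0)
        = ∫ s in (0:ℝ)..t, phiD ε (Dx (Dx u) x s) * Dx (Dx (Dt u)) x s := by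
      intro x
      have hder : ∀ s ∈ uIcc (0:ℝ) t, HasDerivAt (fun r => phiE ε (Dx (Dx u) x r))
          (phiD ε (Dx (Dx u) x s) * Dx (Dx (Dt u)) x s) s := by
        intro s _
        have h1 : HasDerivAt (fun r => Dx (Dx u) x r) (Dx (Dx (Dt u)) x s) s := by
          have h2 := hasDerivAt_Dt hW x s
          rwa [hwt x s] at h2
        exact (phiE_hasDerivAt hε _).comp s h1
      have hint : IntervalIntegrable
          (fun s => phiD ε (Dx (Dx u) x s) * Dx (Dx (Dt u)) x s) volume 0 t :=
        (((phiD_cont ε).comp (contDiff_slice_t hW x).continuous).mul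
          (contDiff_slice_t hH x).continuous).intervalIntegrable _ _
      exact (intervalIntegral.integral_eq_sub_of_hasDerivAt hder hint).symm
    -- integrability of the various integrands
    have hI1 : IntervalIntegrable (fun x => phiE ε (Dx (Dx u) x t)) volume 0 1 :=
      ((phiE_cont hε).comp (contDiff_slice_x hW t).continuous).intervalIntegrable _ _
    have hI2 : IntervalIntegrable (fun x => phiE ε (Dx (Dx u) x 0)) volume 0 1 :=
      ((phiE_cont hε).comp (contDiff_slice_x hW 0).continuous).intervalIntegrable _ _
    -- Fubini
    have hswap : (∫ x in (0:ℝ)..1, ∫ s in (0:ℝ)..t,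
          phiD ε (Dx (Dx u) x s) * Dx (Dx (Dt u)) x s)
        = ∫ s in (0:ℝ)..t, ∫ x in (0:ℝ)..1,
            phiD ε (Dx (Dx u) x s) * Dx (Dx (Dt u)) x s := by
      have hintOn : Integrable
          (Function.uncurry (fun x s => phiD ε (Dx (Dx u) x s) * Dx (Dx (Dt u)) x s))
          ((volume.restrict (Ioc (0:ℝ) 1)).prod (volume.restrict (Ioc (0:ℝ) t))) := by
        rw [Measure.prod_restrict]
        have hcompact : IsCompact (Icc (0:ℝ) 1 ×ˢ Icc (0:ℝ) t) :=
          isCompact_Icc.prod isCompact_Icc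
        have h2 : IntegrableOn
            (fun p : ℝ × ℝ => phiD ε (Dx (Dx u) p.1 p.2) * Dx (Dx (Dt u)) p.1 p.2)
            (Icc (0:ℝ) 1 ×ˢ Icc (0:ℝ) t) (volume.prod volume) := by
          rw [← Measure.volume_eq_prod]
          exact hgcont.continuousOn.integrableOn_compact hcompact
        exact (h2.mono_set (prod_mono Ioc_subset_Icc_self Ioc_subset_Icc_self))
      simp only [intervalIntegral.integral_of_le ht0,
        intervalIntegral.integral_of_le (zero_le_one (α := ℝ))]
      exact MeasureTheory.integral_integral_swap hintOn
    have hIdiff : (∫ x in (0:ℝ)..1, phiE ε (Dx (Dx u) x t))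
          - (∫ x in (0:ℝ)..1, phiE ε (Dx (Dx u) x 0))
        = ∫ s in (0:ℝ)..t, ∫ x in (0:ℝ)..1,
            phiD ε (Dx (Dx u) x s) * Dx (Dx (Dt u)) x s := by
      rw [← intervalIntegral.integral_sub hI1 hI2,
        intervalIntegral.integral_congr (fun x _ => hFTC x)]
      exact hswap
    -- continuity of the inner integral, and the time bound
    have hJcont : Continuous (fun s => ∫ x in (0:ℝ)..1,
        phiD ε (Dx (Dx u) x s) * Dx (Dx (Dt u)) x s) := by
      have hsw : Continuous (Function.uncurry
          (fun s x => phiD ε (Dx (Dx u) x s) * Dx (Dx (Dt u)) x s)) :=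
        hgcont.comp continuous_swap
      exact intervalIntegral.continuous_parametric_intervalIntegral_of_continuous hsw continuous_const
    have htime : (∫ s in (0:ℝ)..t, ∫ x in (0:ℝ)..1,
          phiD ε (Dx (Dx u) x s) * Dx (Dx (Dt u)) x s) ≤ ε * K * T := by
      have h1 : (∫ s in (0:ℝ)..t, ∫ x in (0:ℝ)..1,
            phiD ε (Dx (Dx u) x s) * Dx (Dx (Dt u)) x s)
          ≤ ∫ _s in (0:ℝ)..t, ε * K := by
        apply intervalIntegral.integral_mono_on ht0 (hJcont.intervalIntegrable _ _)
          intervalIntegrable_const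
        intro s hs
        exact hspace s ⟨hs.1, hs.2.trans htT⟩
      have h2 : (∫ _s in (0:ℝ)..t, ε * K) = ε * K * t := by simp; ring
      rw [h2] at h1
      have h3 : ε * K * t ≤ ε * K * T :=
        mul_le_mul_of_nonneg_left htT (by positivity)
      linarith
    have hIt_le : (∫ x in (0:ℝ)..1, phiE ε (Dx (Dx u) x t))
        - (∫ x in (0:ℝ)..1, phiE ε (Dx (Dx u) x 0)) ≤ ε * K * T :=
      hIdiff.trans_le htime
    -- comparison with `max · 0`
    have hmax_t : IntervalIntegrable (fun x => max (Dx (Dx u) x t) 0) volume 0 1 :=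
      ((contDiff_slice_x hW t).continuous.max continuous_const).intervalIntegrable _ _
    have hmax_0 : IntervalIntegrable (fun x => max (Dx (Dx u) x 0) 0) volume 0 1 :=
      ((contDiff_slice_x hW 0).continuous.max continuous_const).intervalIntegrable _ _
    have hfin1 : (∫ x in (0:ℝ)..1, max (Dx (Dx u) x t) 0)
        ≤ (∫ x in (0:ℝ)..1, phiE ε (Dx (Dx u) x t)) + 2 * Real.sqrt (ε * Wb) := by
      have h1 : (∫ x in (0:ℝ)..1, max (Dx (Dx u) x t) 0)
          ≤ ∫ x in (0:ℝ)..1, (phiE ε (Dx (Dx u) x t) + 2 * Real.sqrt (ε * Wb)) := by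
        apply intervalIntegral.integral_mono_on zero_le_one hmax_t
          (hI1.add intervalIntegrable_const)
        intro x hx
        have h2 := phiE_ge hε (hWbb x hx t ⟨ht0, htT⟩)
        linarith
      rw [intervalIntegral.integral_add hI1 intervalIntegrable_const] at h1
      simpa using h1
    have hfin2 : (∫ x in (0:ℝ)..1, phiE ε (Dx (Dx u) x 0))
        ≤ ∫ x in (0:ℝ)..1, max (Dx (Dx u) x 0) 0 := by
      apply intervalIntegral.integral_mono_on zero_le_one hI2 hmax_0
      intro x _
      exact phiE_le_max hε _
    linarith
  -- let ε → 0
  have hcont : Continuous (fun ε : ℝ =>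
      (∫ x in (0:ℝ)..1, max (Dx (Dx u) x 0) 0) + (2 * Real.sqrt (ε * Wb) + ε * K * T)) := by
    have h1 : Continuous fun ε : ℝ => Real.sqrt (ε * Wb) :=
      Real.continuous_sqrt.comp (continuous_id.mul continuous_const)
    exact continuous_const.add ((continuous_const.mul h1).add
      ((continuous_id.mul continuous_const).mul continuous_const))
  have htend : Tendsto (fun ε : ℝ =>
      (∫ x in (0:ℝ)..1, max (Dx (Dx u) x 0) 0) + (2 * Real.sqrt (ε * Wb) + ε * K * T))
      (nhdsWithin 0 (Ioi 0)) (nhds (∫ x in (0:ℝ)..1, max (Dx (Dx u) x 0) 0)) := by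
    have := (hcont.tendsto 0).mono_left (nhdsWithin_le_nhds (s := Ioi (0:ℝ)))
    simpa using this
  have : (∫ x in (0:ℝ)..1, max (Dx (Dx u) x t) 0) ≤
      ∫ x in (0:ℝ)..1, max (Dx (Dx u) x 0) 0 :=
    ge_of_tendsto htend (eventually_nhdsWithin_of_forall (fun ε hε => main ε hε))
  exact this

/-- decay of the variation of the gradient: let `L` be smooth with
`L' > 0` and let `u` be a smooth solution of `u_t = ∂ₓ(L(u_x))` on `[0,1] × [0,T]` whose
boundary values `u(0,t)`, `u(1,t)` are time independent.  Then for every `t ∈ [0,T]`,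
`∫₀¹ (u_xx(x,t))₊ dx ≤ ∫₀¹ (u_xx(x,0))₊ dx` and
`∫₀¹ |u_xx(x,t)| dx ≤ ∫₀¹ |u_xx(x,0)| dx` (the latter integral being the total variation of
`u_x(·,t)` on `[0,1]`). -/
theorem variation_of_gradient_decays
    (T : ℝ) (hT : 0 < T)
    (L : ℝ → ℝ) (hL : ContDiff ℝ (⊤ : ℕ∞) L) (hL' : ∀ p, 0 < deriv L p)
    (u : ℝ → ℝ → ℝ) (hu : ContDiff ℝ (⊤ : ℕ∞) (fun p : ℝ × ℝ => u p.1 p.2))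
    (hpde : ∀ x ∈ Icc (0:ℝ) 1, ∀ t ∈ Icc (0:ℝ) T,
      deriv (fun s => u x s) t =
        deriv L (deriv (fun y => u y t) x) * deriv (fun y => deriv (fun z => u z t) y) x)
    (hbc : ∀ t ∈ Icc (0:ℝ) T, u 0 t = u 0 0 ∧ u 1 t = u 1 0) :
    ∀ t ∈ Icc (0:ℝ) T,
      (∫ x in (0:ℝ)..1, max (deriv (fun y => deriv (fun z => u z t) y) x) 0 ≤
        ∫ x in (0:ℝ)..1, max (deriv (fun y => deriv (fun z => u z 0) y) x) 0) ∧
      (∫ x in (0:ℝ)..1, |deriv (fun y => deriv (fun z => u z t) y) x| ≤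
        ∫ x in (0:ℝ)..1, |deriv (fun y => deriv (fun z => u z 0) y) x|) := by
  intro t ht
  have hpos := posPart_decay T hT L hL hL' u hu hpde hbc t ht
  -- data for the reflected solution
  have hdiffL : Differentiable ℝ L := hL.differentiable (by simp)
  have hL2smooth : ContDiff ℝ (⊤ : ℕ∞) (fun p : ℝ => -L (-p)) := (hL.comp contDiff_id.neg).neg
  have hderivL2 : ∀ p : ℝ, deriv (fun p : ℝ => -L (-p)) p = deriv L (-p) := by
    intro p
    have h1 : HasDerivAt (fun p : ℝ => L (-p)) (deriv L (-p) * (-1)) p :=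
      (hdiffL (-p)).hasDerivAt.comp p (hasDerivAt_neg p)
    have h2 := h1.neg
    have h3 : -(deriv L (-p) * (-1)) = deriv L (-p) := by ring
    rw [h3] at h2
    exact h2.deriv
  have hL2' : ∀ p : ℝ, 0 < deriv (fun p : ℝ => -L (-p)) p := by
    intro p
    rw [hderivL2]
    exact hL' _
  have hu2 : ContDiff ℝ (⊤ : ℕ∞) (fun p : ℝ × ℝ => (fun x s => -u x s) p.1 p.2) := hu.neg
  -- derivative rewrites for the reflected solution
  have hrw1 : ∀ s x : ℝ, deriv (fun y => (fun x s => -u x s) y s) x = -(Dx u x s) := by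
    intro s x
    exact deriv.neg
  have hrw2 : ∀ s x : ℝ, deriv (fun y => deriv (fun z => (fun x s => -u x s) z s) y) x
      = -(Dx (Dx u) x s) := by
    intro s x
    have h1 : (fun y => deriv (fun z => -u z s) y) = fun y => -(deriv (fun z => u z s) y) := by
      funext y
      exact deriv.neg
    show deriv (fun y => deriv (fun z => -u z s) y) x = _
    rw [h1]
    exact deriv.neg
  have hrw3 : ∀ x s : ℝ, deriv (fun s' => (fun x s => -u x s) x s') s = -(Dt u x s) := by
    intro x s
    exact deriv.neg
  have hpde2 : ∀ x ∈ Icc (0:ℝ) 1, ∀ s ∈ Icc (0:ℝ) T,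
      deriv (fun s' => (fun x s => -u x s) x s') s =
        deriv (fun p : ℝ => -L (-p)) (deriv (fun y => (fun x s => -u x s) y s) x)
          * deriv (fun y => deriv (fun z => (fun x s => -u x s) z s) y) x := by
    intro x hx s hs
    rw [hrw3 x s, hrw1 s x, hrw2 s x, hderivL2, neg_neg]
    have h0 : Dt u x s = deriv L (Dx u x s) * Dx (Dx u) x s := hpde x hx s hs
    show -(Dt u x s) = _
    rw [h0]
    ring
  have hbc2 : ∀ s ∈ Icc (0:ℝ) T,
      (fun x s => -u x s) 0 s = (fun x s => -u x s) 0 0 ∧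
      (fun x s => -u x s) 1 s = (fun x s => -u x s) 1 0 := by
    intro s hs
    exact ⟨by simp [(hbc s hs).1], by simp [(hbc s hs).2]⟩
  have hneg := posPart_decay T hT (fun p : ℝ => -L (-p)) hL2smooth hL2' (fun x s => -u x s)
    hu2 hpde2 hbc2 t ht
  -- rewrite the reflected conclusion
  have hnegint : ∀ s : ℝ, (∫ x in (0:ℝ)..1,
        max (deriv (fun y => deriv (fun z => (fun x s => -u x s) z s) y) x) 0)
      = ∫ x in (0:ℝ)..1, max (-(Dx (Dx u) x s)) 0 := by
    intro s
    apply intervalIntegral.integral_congr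
    intro x _
    exact congrArg (fun r => max r 0) (hrw2 s x)
  have hneg' : (∫ x in (0:ℝ)..1, max (-(Dx (Dx u) x t)) 0)
      ≤ ∫ x in (0:ℝ)..1, max (-(Dx (Dx u) x 0)) 0 := by
    calc (∫ x in (0:ℝ)..1, max (-(Dx (Dx u) x t)) 0)
        = ∫ x in (0:ℝ)..1,
            max (deriv (fun y => deriv (fun z => (fun x' s' => -u x' s') z t) y) x) 0 :=
          (hnegint t).symm
      _ ≤ ∫ x in (0:ℝ)..1,
            max (deriv (fun y => deriv (fun z => (fun x' s' => -u x' s') z 0) y) x) 0 := hneg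
      _ = _ := hnegint 0
  -- |a| = a⁺ + (-a)⁺
  have habs : ∀ a : ℝ, |a| = max a 0 + max (-a) 0 := by
    intro a
    rcases le_total a 0 with h | h
    · rw [abs_of_nonpos h, max_eq_right h, max_eq_left (neg_nonneg.2 h)]
      ring
    · rw [abs_of_nonneg h, max_eq_left h, max_eq_right (neg_nonpos.2 h)]
      ring
  have hW : ContDiff ℝ (⊤ : ℕ∞) (fun p : ℝ × ℝ => Dx (Dx u) p.1 p.2) :=
    contDiff_Dx (contDiff_Dx hu)
  have habsint : ∀ s : ℝ, (∫ x in (0:ℝ)..1, |deriv (fun y => deriv (fun z => u z s) y) x|)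
      = (∫ x in (0:ℝ)..1, max (Dx (Dx u) x s) 0)
        + ∫ x in (0:ℝ)..1, max (-(Dx (Dx u) x s)) 0 := by
    intro s
    have hint1 : IntervalIntegrable (fun x => max (Dx (Dx u) x s) 0) volume 0 1 :=
      ((contDiff_slice_x hW s).continuous.max continuous_const).intervalIntegrable _ _
    have hint2 : IntervalIntegrable (fun x => max (-(Dx (Dx u) x s)) 0) volume 0 1 :=
      ((contDiff_slice_x hW s).continuous.neg.max continuous_const).intervalIntegrable _ _
    rw [← intervalIntegral.integral_add hint1 hint2]
    apply intervalIntegral.integral_congr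
    intro x _
    exact habs _
  refine ⟨hpos, ?_⟩
  rw [habsint t, habsint 0]
  exact add_le_add hpos hneg'
end
end

section
/- Boundary values of the flux on a facet: let W : ℝ → ℝ be convex, let c ∈ ℝ, and set a := W'₋(c) (left derivative of W at c) and b := W'₊(c) (right derivative of W at c). Let 0 < ξ₋ < ξ₊ < 1 and let v : (0,1) → ℝ be nondecreasing with v(x) < c for x < ξ₋, v(x) = c for ξ₋ ≤ x ≤ ξ₊, and v(x) > c for x > ξ₊. Let ω : (0,1) → ℝ be continuous and such that for almost every x ∈ (0,1), ω(x) is a subgradient of W at v(x). Then ω(ξ₋) = a, ω(ξ₊) = b, and a ≤ ω(x) ≤ b for all x ∈ [ξ₋, ξ₊]. -/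
open MeasureTheory Set Filter Topology

noncomputable section

/-- `ω` is a subgradient of the convex function `W` at `q`. -/
def IsSubgradient (W : ℝ → ℝ) (q ω : ℝ) : Prop :=
  ∀ p : ℝ, W p ≥ W q + ω * (p - q)

/-- A point of `Icc l r` is in the closure of the a.e.-set inside `Ioo l r`. -/
lemma mem_closure_of_ae_Ioo {l r x : ℝ} (hlr : l < r) (hx : x ∈ Icc l r)
    {P : ℝ → Prop} (hP : ∀ᵐ y ∂(volume.restrict (Ioo l r)), P y) :
    x ∈ closure {y | y ∈ Ioo l r ∧ P y} := by
  have hnull : volume ({y | ¬ P y} ∩ Ioo l r) = 0 := by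
    have := hP
    rw [ae_iff, Measure.restrict_apply' measurableSet_Ioo] at this
    exact this
  rw [mem_closure_iff]
  intro U hU hxU
  have hxcl : x ∈ closure (Ioo l r) := by
    rw [closure_Ioo hlr.ne]; exact hx
  obtain ⟨z, hzU, hz⟩ := mem_closure_iff.mp hxcl U hU hxU
  have hopen : IsOpen (U ∩ Ioo l r) := hU.inter isOpen_Ioo
  have hpos : 0 < volume (U ∩ Ioo l r) :=
    hopen.measure_pos volume ⟨z, hzU, hz⟩
  by_contra hcon
  push_neg at hcon
  have hsubset : U ∩ Ioo l r ⊆ {y | ¬ P y} ∩ Ioo l r := by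
    rintro y ⟨hyU, hy⟩
    refine ⟨fun hPy => ?_, hy⟩
    have : y ∈ U ∩ {y | y ∈ Ioo l r ∧ P y} := ⟨hyU, hy, hPy⟩
    rw [hcon] at this
    exact this
  exact absurd (measure_mono_null hsubset hnull) hpos.ne'

section subgrad

variable {W : ℝ → ℝ} {c a b : ℝ}

lemma a_le_subgrad_at (ha : HasDerivWithinAt W a (Iio c) c) {ω₀ : ℝ}
    (h : IsSubgradient W c ω₀) : a ≤ ω₀ := by
  have ht : Tendsto (slope W c) (𝓝[Iio c \ {c}] c) (𝓝 a) :=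
    hasDerivWithinAt_iff_tendsto_slope.mp ha
  have hIio : Iio c \ {c} = Iio c :=
    diff_singleton_eq_self (by simp)
  rw [hIio] at ht
  refine le_of_tendsto ht ?_
  filter_upwards [self_mem_nhdsWithin] with p hp
  rw [slope_def_field]
  have hpc : p - c < 0 := sub_neg.mpr hp
  rw [div_le_iff_of_neg hpc]
  have := h p
  linarith [this]

lemma subgrad_at_le_b (hb : HasDerivWithinAt W b (Ioi c) c) {ω₀ : ℝ}
    (h : IsSubgradient W c ω₀) : ω₀ ≤ b := by
  have ht : Tendsto (slope W c) (𝓝[Ioi c \ {c}] c) (𝓝 b) :=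
    hasDerivWithinAt_iff_tendsto_slope.mp hb
  have hIoi : Ioi c \ {c} = Ioi c :=
    diff_singleton_eq_self (by simp)
  rw [hIoi] at ht
  refine ge_of_tendsto ht ?_
  filter_upwards [self_mem_nhdsWithin] with p hp
  rw [slope_def_field]
  have hpc : 0 < p - c := sub_pos.mpr hp
  rw [le_div_iff₀ hpc]
  have := h p
  linarith [this]

lemma subgrad_lt_le_a (hW : ConvexOn ℝ univ W) (ha : HasDerivWithinAt W a (Iio c) c)
    {q ω₀ : ℝ} (hq : q < c) (h : IsSubgradient W q ω₀) : ω₀ ≤ a := by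
  have h1 : ω₀ ≤ slope W c q := by
    rw [slope_def_field]
    have hqc : q - c < 0 := sub_neg.mpr hq
    rw [le_div_iff_of_neg hqc]
    have := h c
    linarith [this]
  refine le_trans h1 ?_
  have ht : Tendsto (slope W c) (𝓝[Iio c \ {c}] c) (𝓝 a) :=
    hasDerivWithinAt_iff_tendsto_slope.mp ha
  have hIio : Iio c \ {c} = Iio c :=
    diff_singleton_eq_self (by simp)
  rw [hIio] at ht
  refine ge_of_tendsto ht ?_
  filter_upwards [Ioo_mem_nhdsLT_of_mem (right_mem_Ioc.mpr hq)] with p hp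
  have := hW.secant_mono (a := c) (x := q) (y := p) (mem_univ c) (mem_univ q)
    (mem_univ p) (ne_of_lt hq) (ne_of_lt hp.2) (le_of_lt hp.1)
  rw [slope_def_field, slope_def_field]
  exact this

lemma b_le_subgrad_gt (hW : ConvexOn ℝ univ W) (hb : HasDerivWithinAt W b (Ioi c) c)
    {q ω₀ : ℝ} (hq : c < q) (h : IsSubgradient W q ω₀) : b ≤ ω₀ := by
  have h1 : slope W c q ≤ ω₀ := by
    rw [slope_def_field]
    have hqc : 0 < q - c := sub_pos.mpr hq
    rw [div_le_iff₀ hqc]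
    have := h c
    linarith [this]
  refine le_trans ?_ h1
  have ht : Tendsto (slope W c) (𝓝[Ioi c \ {c}] c) (𝓝 b) :=
    hasDerivWithinAt_iff_tendsto_slope.mp hb
  have hIoi : Ioi c \ {c} = Ioi c :=
    diff_singleton_eq_self (by simp)
  rw [hIoi] at ht
  refine le_of_tendsto ht ?_
  filter_upwards [Ioo_mem_nhdsGT_of_mem (left_mem_Ico.mpr hq)] with p hp
  have := hW.secant_mono (a := c) (x := p) (y := q) (mem_univ c) (mem_univ p)
    (mem_univ q) (ne_of_gt hp.1) (ne_of_gt hq) (le_of_lt hp.2)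
  rw [slope_def_field, slope_def_field]
  exact this

end subgrad

/-- boundary values of the flux on a facet: let `W` be convex,
`a := W'₋(c)`, `b := W'₊(c)`, let `v` be nondecreasing on `(0,1)` with `v < c` before `ξ₋`,
`v = c` on `[ξ₋, ξ₊]` and `v > c` after `ξ₊`, and let `ω` be continuous with
`ω(x) ∈ ∂W(v(x))` for a.e. `x`.  Then `ω(ξ₋) = a`, `ω(ξ₊) = b` and `a ≤ ω ≤ b` on
`[ξ₋, ξ₊]`. -/
theorem facet_flux_boundary_values
    (W : ℝ → ℝ) (hW : ConvexOn ℝ univ W)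
    (c a b : ℝ)
    (ha : HasDerivWithinAt W a (Iio c) c)   -- `a = W'₋(c)`
    (hb : HasDerivWithinAt W b (Ioi c) c)   -- `b = W'₊(c)`
    (ξm ξp : ℝ) (h0 : 0 < ξm) (hmp : ξm < ξp) (h1 : ξp < 1)
    (v : ℝ → ℝ) (hmono : MonotoneOn v (Ioo (0:ℝ) 1))
    (hlt : ∀ x ∈ Ioo (0:ℝ) 1, x < ξm → v x < c)
    (heq : ∀ x ∈ Icc ξm ξp, v x = c)
    (hgt : ∀ x ∈ Ioo (0:ℝ) 1, ξp < x → c < v x)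
    (ω : ℝ → ℝ) (hω : ContinuousOn ω (Ioo (0:ℝ) 1))
    (hsub : ∀ᵐ x ∂(volume.restrict (Ioo (0:ℝ) 1)), IsSubgradient W (v x) (ω x)) :
    ω ξm = a ∧ ω ξp = b ∧ ∀ x ∈ Icc ξm ξp, a ≤ ω x ∧ ω x ≤ b := by
  have hξm01 : ξm ∈ Ioo (0:ℝ) 1 := ⟨h0, hmp.trans h1⟩
  have hξp01 : ξp ∈ Ioo (0:ℝ) 1 := ⟨h0.trans hmp, h1⟩
  -- a.e. statements on subintervals
  have hsub_mid : ∀ᵐ x ∂(volume.restrict (Ioo ξm ξp)), IsSubgradient W (v x) (ω x) :=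
    ae_restrict_of_ae_restrict_of_subset
      (Ioo_subset_Ioo (le_of_lt h0) (le_of_lt h1)) hsub
  have hsub_left : ∀ᵐ x ∂(volume.restrict (Ioo 0 ξm)), IsSubgradient W (v x) (ω x) :=
    ae_restrict_of_ae_restrict_of_subset
      (Ioo_subset_Ioo le_rfl (le_of_lt (hmp.trans h1))) hsub
  have hsub_right : ∀ᵐ x ∂(volume.restrict (Ioo ξp 1)), IsSubgradient W (v x) (ω x) :=
    ae_restrict_of_ae_restrict_of_subset
      (Ioo_subset_Ioo (le_of_lt (h0.trans hmp)) le_rfl) hsub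
  -- middle: a ≤ ω x ≤ b on Icc ξm ξp
  have hmid : ∀ x ∈ Icc ξm ξp, a ≤ ω x ∧ ω x ≤ b := by
    intro x hx
    set A : Set ℝ := {y | y ∈ Ioo ξm ξp ∧ IsSubgradient W (v y) (ω y)}
    have hxA : x ∈ closure A := mem_closure_of_ae_Ioo hmp hx hsub_mid
    have hx01 : x ∈ Ioo (0:ℝ) 1 :=
      ⟨h0.trans_le hx.1, lt_of_le_of_lt hx.2 h1⟩
    have hA01 : A ⊆ Ioo (0:ℝ) 1 := fun y hy =>
      ⟨h0.trans hy.1.1, hy.1.2.trans h1⟩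
    have hcw : ContinuousWithinAt ω A x := (hω x hx01).mono hA01
    have himg : ω x ∈ closure (ω '' A) := hcw.mem_closure_image hxA
    have hsub' : ω '' A ⊆ Icc a b := by
      rintro _ ⟨y, hy, rfl⟩
      obtain ⟨hy1, hy2⟩ := hy
      have hvy : v y = c := heq y (Ioo_subset_Icc_self hy1)
      rw [hvy] at hy2
      exact ⟨a_le_subgrad_at ha hy2, subgrad_at_le_b hb hy2⟩
    have := (isClosed_Icc.closure_subset_iff.mpr hsub') himg
    exact ⟨this.1, this.2⟩
  -- left: ω ξm ≤ a
  have hleft : ω ξm ≤ a := by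
    set A : Set ℝ := {y | y ∈ Ioo 0 ξm ∧ IsSubgradient W (v y) (ω y)}
    have hxA : ξm ∈ closure A :=
      mem_closure_of_ae_Ioo h0 (right_mem_Icc.mpr (le_of_lt h0)) hsub_left
    have hA01 : A ⊆ Ioo (0:ℝ) 1 := fun y hy =>
      ⟨hy.1.1, hy.1.2.trans (hmp.trans h1)⟩
    have hcw : ContinuousWithinAt ω A ξm := (hω ξm hξm01).mono hA01
    have himg : ω ξm ∈ closure (ω '' A) := hcw.mem_closure_image hxA
    have hsub' : ω '' A ⊆ Iic a := by
      rintro _ ⟨y, hy, rfl⟩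
      have hvy : v y < c := hlt y (hA01 hy) hy.1.2
      exact subgrad_lt_le_a hW ha hvy hy.2
    exact (isClosed_Iic.closure_subset_iff.mpr hsub') himg
  -- right: b ≤ ω ξp
  have hright : b ≤ ω ξp := by
    set A : Set ℝ := {y | y ∈ Ioo ξp 1 ∧ IsSubgradient W (v y) (ω y)}
    have hxA : ξp ∈ closure A :=
      mem_closure_of_ae_Ioo h1 (left_mem_Icc.mpr (le_of_lt h1)) hsub_right
    have hA01 : A ⊆ Ioo (0:ℝ) 1 := fun y hy =>
      ⟨(h0.trans hmp).trans hy.1.1, hy.1.2⟩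
    have hcw : ContinuousWithinAt ω A ξp := (hω ξp hξp01).mono hA01
    have himg : ω ξp ∈ closure (ω '' A) := hcw.mem_closure_image hxA
    have hsub' : ω '' A ⊆ Ici b := by
      rintro _ ⟨y, hy, rfl⟩
      have hvy : c < v y := hgt y (hA01 hy) hy.1.1
      exact b_le_subgrad_gt hW hb hvy hy.2
    exact (isClosed_Ici.closure_subset_iff.mpr hsub') himg
  have hm := hmid ξm (left_mem_Icc.mpr (le_of_lt hmp))
  have hp := hmid ξp (right_mem_Icc.mpr (le_of_lt hmp))
  exact ⟨le_antisymm hleft hm.1, le_antisymm hp.2 hright, hmid⟩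
end
end
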